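/- Let A be a unital complex *-algebra and let u be a magic unitary over A for the complement of the graph O^-(6,2) (this complement is the Schläfli graph). Then all entries of u pairwise commute: u_{ij} * u_{kl} = u_{kl} * u_{ij} for all vertices i, j, k, l. (Equivalently, the Schläfli graph has no quantum symmetry.) -/

import Mathlib

set_option maxHeartbeats 4000000
set_option maxRecDepth 100000


/-- The quadratic form `Q(v) = v₀v₁ + v₂v₃ + v₄² + v₄v₅ + v₅²` on `F₂⁶`. -/
def Q2 (v : Fin 6 → ZMod 2) : ZMod 2 :=
  v 0 * v 1 + v 2 * v 3 + v 4 ^ 2 + v 4 * v 5 + v 5 ^ 2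

/-- The vertex set of `O⁻(6,2)`: nonzero vectors of `F₂⁶` with `Q(v) = 0`. -/
def OVert2 : Type := {v : Fin 6 → ZMod 2 // v ≠ 0 ∧ Q2 v = 0}

instance : Fintype OVert2 :=
  inferInstanceAs (Fintype {v : Fin 6 → ZMod 2 // v ≠ 0 ∧ Q2 v = 0})

/-- The graph `O⁻(6,2)`: two distinct singular nonzero vectors `v, w` are adjacent iff
`Q(v + w) = 0`. -/
def OMinus62 : SimpleGraph OVert2 where
  Adj v w := v ≠ w ∧ Q2 (v.1 + w.1) = 0
  symm := ⟨by
    rintro v w ⟨h1, h2⟩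
    exact ⟨h1.symm, by rwa [add_comm w.1 v.1]⟩⟩
  loopless := ⟨fun v h => h.1 rfl⟩

/-- A magic unitary for a finite simple graph `X` over a unital complex `*`-algebra `A`:
a family `u i j` of self-adjoint idempotents whose rows and columns are orthogonal and
sum to `1`, with `u i j * u k l = 0` whenever exactly one of `(i,k)`, `(j,l)` is an edge. -/
structure IsMagicUnitary {V : Type*} [Fintype V] (X : SimpleGraph V) (A : Type*)
    [Ring A] [StarRing A] [Algebra ℂ A] (u : V → V → A) : Prop where
  star_self : ∀ i j, star (u i j) = u i j
  idem : ∀ i j, u i j * u i j = u i j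
  row_orth : ∀ i j k, j ≠ k → u i j * u i k = 0
  col_orth : ∀ i j k, j ≠ k → u j i * u k i = 0
  row_sum : ∀ i, ∑ k, u i k = 1
  col_sum : ∀ i, ∑ k, u k i = 1
  adj_mul_eq_zero : ∀ i j k l, X.Adj i k → ¬X.Adj j l → u i j * u k l = 0
  adj_mul_eq_zero' : ∀ i j k l, ¬X.Adj i k → X.Adj j l → u i j * u k l = 0

namespace SchlafliAux

/-! ### Combinatorial layer -/

instance instDecEqOV : DecidableEq OVert2 :=
  inferInstanceAs (DecidableEq {v : Fin 6 → ZMod 2 // v ≠ 0 ∧ Q2 v = 0})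

abbrev Adj (v w : OVert2) : Prop := OMinus62.Adj v w

instance instDecAdj (v w : OVert2) : Decidable (Adj v w) :=
  inferInstanceAs (Decidable (v ≠ w ∧ Q2 (v.1 + w.1) = 0))

lemma adj_def {v w : OVert2} : Adj v w ↔ (v ≠ w ∧ Q2 (v.1 + w.1) = 0) := Iff.rfl

lemma z_add_self : ∀ a : ZMod 2, a + a = 0 := by decide
lemma z_cancel : ∀ a b : ZMod 2, a + (a + b) = b := by decide
lemma z_cancel' : ∀ a b : ZMod 2, (a + b) + b = a := by decide
lemma z_zero : ∀ a b : ZMod 2, a + b = 0 → a = b := by decide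

lemma vec_add_self (x : Fin 6 → ZMod 2) : x + x = 0 := by
  funext i; exact z_add_self (x i)

lemma vec_cancel (x y : Fin 6 → ZMod 2) : x + (x + y) = y := by
  funext i; exact z_cancel (x i) (y i)

lemma vec_cancel' (x y : Fin 6 → ZMod 2) : (x + y) + y = x := by
  funext i; exact z_cancel' (x i) (y i)

lemma vec_zero {x y : Fin 6 → ZMod 2} (h : x + y = 0) : x = y := by
  funext i; exact z_zero (x i) (y i) (congrFun h i)

/-- encoding of a vector of `F₂⁶` as a 6-bit number -/
def enc (v : Fin 6 → ZMod 2) : ℕ :=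
  (v 0).val + 2 * (v 1).val + 4 * (v 2).val + 8 * (v 3).val + 16 * (v 4).val + 32 * (v 5).val

/-- bitmask of codes of nonzero singular vectors -/
def MS : ℕ := 8685324408917100406

/-- the list of codes of the 27 vertices -/
def Lc : List ℕ := [1, 2, 4, 5, 6, 8, 9, 10, 15, 19, 23, 27, 28, 29, 30, 35,
  39, 43, 44, 45, 46, 51, 55, 59, 60, 61, 62]

lemma sing_iff : ∀ x : Fin 6 → ZMod 2, (x ≠ 0 ∧ Q2 x = 0) ↔ MS.testBit (enc x) = true := by
  decide

lemma enc_add : ∀ v w : OVert2, enc (v.1 + w.1) = enc v.1 ^^^ enc w.1 := by decide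

lemma enc_inj : ∀ v w : OVert2, enc v.1 = enc w.1 → v = w := by decide

lemma mem_Lc : ∀ v : OVert2, enc v.1 ∈ Lc := by decide

lemma Lc_surj : ∀ a ∈ Lc, ∃ v : OVert2, enc v.1 = a := by decide

lemma adj_iff_bit (v w : OVert2) : Adj v w ↔ MS.testBit (enc v.1 ^^^ enc w.1) = true := by
  rw [← enc_add v w, adj_def]
  constructor
  · rintro ⟨h1, h2⟩
    exact (sing_iff _).mp ⟨fun h0 => h1 (Subtype.ext (vec_zero h0)), h2⟩
  · intro h
    obtain ⟨h0, h2⟩ := (sing_iff _).mpr h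
    exact ⟨fun he => h0 (by rw [he]; exact vec_add_self _), h2⟩

lemma enc_ne {v w : OVert2} (h : v ≠ w) : enc v.1 ≠ enc w.1 :=
  fun he => h (enc_inj v w he)

/-- triangle uniqueness at bit-code level -/
lemma listC3 : (Lc.all fun a => Lc.all fun b => Lc.all fun c =>
    (!(MS.testBit (a ^^^ b)) || !(MS.testBit (c ^^^ a)) || !(MS.testBit (c ^^^ b))
      || (c == a ^^^ b))) = true := by decide

/-- the covering fact at bit-code level -/
lemma listCC : (Lc.all fun a => Lc.all fun b => Lc.all fun c =>
    (MS.testBit (a ^^^ b)) || (MS.testBit (c ^^^ b)) || (a == b) || (c == b) || (c == a)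
      || Lc.any fun d => (MS.testBit (d ^^^ a)) && (MS.testBit (d ^^^ b))
            && ((c == d ^^^ b) || MS.testBit (c ^^^ (d ^^^ b)))) = true := by decide

/-- the third point of the line through two adjacent vertices -/
noncomputable def tp (v w : OVert2) : OVert2 :=
  if h : Adj v w then
    ⟨v.1 + w.1, fun h0 => h.ne (Subtype.ext (vec_zero h0)), h.2⟩
  else v

lemma tp_val {v w : OVert2} (h : Adj v w) : (tp v w).1 = v.1 + w.1 := by
  exact congrArg Subtype.val (dif_pos h : tp v w = _)

lemma adj_tp_left {v w : OVert2} (h : Adj v w) : Adj v (tp v w) := by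
  rw [adj_def]
  constructor
  · intro he
    have h1 : v.1 = v.1 + w.1 := by rw [← tp_val h]; exact congrArg Subtype.val he
    have h2 : w.1 = 0 := by rw [← vec_cancel v.1 w.1, ← h1, vec_add_self]
    exact w.2.1 h2
  · rw [tp_val h, vec_cancel]; exact w.2.2

lemma adj_tp_right {v w : OVert2} (h : Adj v w) : Adj w (tp v w) := by
  rw [adj_def]
  constructor
  · intro he
    have h1 : w.1 = v.1 + w.1 := by rw [← tp_val h]; exact congrArg Subtype.val he
    have h2 : v.1 = 0 := by rw [← vec_cancel' v.1 w.1, ← h1, vec_add_self]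
    exact v.2.1 h2
  · rw [tp_val h]
    have h3 : w.1 + (v.1 + w.1) = v.1 := by rw [add_comm v.1 w.1, vec_cancel]
    rw [h3]; exact v.2.2

lemma tp_tp {v w : OVert2} (h : Adj v w) : tp v (tp v w) = w := by
  apply Subtype.ext
  rw [tp_val (adj_tp_left h), tp_val h, vec_cancel]

lemma tp_tp_right {v w : OVert2} (h : Adj v w) : tp (tp v w) w = v := by
  apply Subtype.ext
  rw [tp_val (adj_tp_right h).symm, tp_val h, vec_cancel']

/-- uniqueness of the common neighbour of two adjacent vertices -/
lemma uniq {i k p : OVert2} (hik : Adj i k) (hpi : Adj p i) (hpk : Adj p k) : p = tp i k := by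
  have H : ∀ a ∈ Lc, ∀ b ∈ Lc, ∀ c ∈ Lc,
      MS.testBit (a ^^^ b) = true → MS.testBit (c ^^^ a) = true →
      MS.testBit (c ^^^ b) = true → c = a ^^^ b := by
    intro a ha b hb c hc t1 t2 t3
    have h := listC3
    rw [List.all_eq_true] at h
    have h := h a ha
    rw [List.all_eq_true] at h
    have h := h b hb
    rw [List.all_eq_true] at h
    have h := h c hc
    simp only [Bool.or_eq_true, Bool.not_eq_true', beq_iff_eq] at h
    rcases h with (((h | h) | h) | h)
    · rw [t1] at h; cases h
    · rw [t2] at h; cases h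
    · rw [t3] at h; cases h
    · exact h
  have hc : enc p.1 = enc i.1 ^^^ enc k.1 :=
    H _ (mem_Lc i) _ (mem_Lc k) _ (mem_Lc p)
      ((adj_iff_bit i k).mp hik) ((adj_iff_bit p i).mp hpi) ((adj_iff_bit p k).mp hpk)
  apply enc_inj
  rw [hc, tp_val hik, enc_add]

/-- the covering fact (CC): for `j, j'` both non-adjacent to `l`, some line through `l`
meets the neighbourhood of `j` and its third point is `j'` or adjacent to `j'`. -/
lemma exists_q {j l j' : OVert2} (hjl : ¬Adj j l) (hj'l : ¬Adj j' l) (hjlne : j ≠ l)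
    (hj'lne : j' ≠ l) (hj'j : j' ≠ j) :
    ∃ q : OVert2, Adj q j ∧ Adj q l ∧ (j' = tp q l ∨ Adj j' (tp q l)) := by
  have H : ∀ a ∈ Lc, ∀ b ∈ Lc, ∀ c ∈ Lc,
      MS.testBit (a ^^^ b) = false → MS.testBit (c ^^^ b) = false →
      a ≠ b → c ≠ b → c ≠ a →
      ∃ d ∈ Lc, (MS.testBit (d ^^^ a) = true ∧ MS.testBit (d ^^^ b) = true) ∧
        (c = d ^^^ b ∨ MS.testBit (c ^^^ (d ^^^ b)) = true) := by
    intro a ha b hb c hc t1 t2 t3 t4 t5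
    have h := listCC
    rw [List.all_eq_true] at h
    have h := h a ha
    rw [List.all_eq_true] at h
    have h := h b hb
    rw [List.all_eq_true] at h
    have h := h c hc
    simp only [Bool.or_eq_true, beq_iff_eq, List.any_eq_true, Bool.and_eq_true] at h
    rcases h with (((((h | h) | h) | h) | h) | h)
    · rw [t1] at h; cases h
    · rw [t2] at h; cases h
    · exact absurd h t3
    · exact absurd h t4
    · exact absurd h t5
    · obtain ⟨d, hd, ⟨h1, h2⟩, h3⟩ := h
      exact ⟨d, hd, ⟨h1, h2⟩, h3⟩
  have hb1 : MS.testBit (enc j.1 ^^^ enc l.1) = false := by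
    rw [← Bool.not_eq_true]
    exact fun h => hjl ((adj_iff_bit j l).mpr h)
  have hb2 : MS.testBit (enc j'.1 ^^^ enc l.1) = false := by
    rw [← Bool.not_eq_true]
    exact fun h => hj'l ((adj_iff_bit j' l).mpr h)
  obtain ⟨d, hd, ⟨h1, h2⟩, h3⟩ :=
    H _ (mem_Lc j) _ (mem_Lc l) _ (mem_Lc j') hb1 hb2 (enc_ne hjlne) (enc_ne hj'lne)
      (enc_ne hj'j)
  obtain ⟨q, hq⟩ := Lc_surj d hd
  subst hq
  have hqj : Adj q j := (adj_iff_bit q j).mpr h1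
  have hql : Adj q l := (adj_iff_bit q l).mpr h2
  have henc : enc (tp q l).1 = enc q.1 ^^^ enc l.1 := by rw [tp_val hql, enc_add]
  refine ⟨q, hqj, hql, ?_⟩
  rcases h3 with h | h
  · left; apply enc_inj; rw [h, henc]
  · right
    apply (adj_iff_bit j' (tp q l)).mpr
    rw [henc]; exact h

/-! ### Algebraic layer -/

variable {A : Type*} [Ring A] [StarRing A] [Algebra ℂ A]
variable (u : OVert2 → OVert2 → A) (hu : IsMagicUnitary OMinus62ᶜ A u)

/-- neighbourhood as a finset -/
def Nb (x : OVert2) : Finset OVert2 := Finset.univ.filter (fun y => Adj x y)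

lemma mem_Nb {x y : OVert2} : y ∈ Nb x ↔ Adj x y := by
  simp [Nb]

section
include hu

/-- kill: rows adjacent, columns not adjacent (and distinct) -/
lemma kan {a b c d : OVert2} (h1 : Adj a c) (h2 : ¬Adj b d) (h3 : b ≠ d) :
    u a b * u c d = 0 := by
  refine hu.adj_mul_eq_zero' a b c d ?_ ?_
  · rw [SimpleGraph.compl_adj]; rintro ⟨-, hn⟩; exact hn h1
  · rw [SimpleGraph.compl_adj]; exact ⟨h3, h2⟩

/-- kill: rows not adjacent (and distinct), columns adjacent -/
lemma kna {a b c d : OVert2} (h1 : ¬Adj a c) (h1' : a ≠ c) (h2 : Adj b d) :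
    u a b * u c d = 0 := by
  refine hu.adj_mul_eq_zero a b c d ?_ ?_
  · rw [SimpleGraph.compl_adj]; exact ⟨h1', h1⟩
  · rw [SimpleGraph.compl_adj]; rintro ⟨-, hn⟩; exact hn h2

/-- (R): the magic unitary commutes with the adjacency matrix -/
lemma Rlem (k l : OVert2) : ∑ p ∈ Nb k, u p l = ∑ q ∈ Nb l, u k q := by
  have h1 : ∀ p ∈ Nb k, u p l = ∑ q ∈ Nb l, u p l * u k q := by
    intro p hp
    have hkp : Adj k p := mem_Nb.mp hp
    calc u p l = u p l * ∑ q, u k q := by rw [hu.row_sum, mul_one]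
      _ = ∑ q, u p l * u k q := by rw [Finset.mul_sum]
      _ = ∑ q ∈ Nb l, u p l * u k q := by
          refine (Finset.sum_subset (Finset.subset_univ _) ?_).symm
          intro q _ hq
          rw [mem_Nb] at hq
          by_cases hql : q = l
          · subst hql
            exact hu.col_orth q p k (fun h => hkp.ne h.symm)
          · exact kan u hu hkp.symm hq (Ne.symm hql)
  have h2 : ∀ q ∈ Nb l, ∑ p ∈ Nb k, u p l * u k q = u k q := by
    intro q hq
    have hlq : Adj l q := mem_Nb.mp hq
    calc ∑ p ∈ Nb k, u p l * u k q = ∑ p, u p l * u k q := by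
          refine Finset.sum_subset (Finset.subset_univ _) ?_
          intro p _ hp
          rw [mem_Nb] at hp
          by_cases hpk : p = k
          · subst hpk
            exact hu.row_orth p l q hlq.ne
          · exact kna u hu (fun h => hp h.symm) hpk hlq
      _ = (∑ p, u p l) * u k q := by rw [Finset.sum_mul]
      _ = u k q := by rw [hu.col_sum, one_mul]
  calc ∑ p ∈ Nb k, u p l = ∑ p ∈ Nb k, ∑ q ∈ Nb l, u p l * u k q :=
        Finset.sum_congr rfl h1
    _ = ∑ q ∈ Nb l, ∑ p ∈ Nb k, u p l * u k q := Finset.sum_comm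
    _ = ∑ q ∈ Nb l, u k q := Finset.sum_congr rfl h2

/-- key lemma for adjacent rows -/
lemma key1 {i k j l j' : OVert2} (hik : Adj i k) (hjl : Adj j l) (hj'l : Adj j' l)
    (hj'j : j' ≠ j) : u i j * u k l * u i j' = 0 := by
  have him : Adj i (tp i k) := adj_tp_left hik
  have hkm : Adj k (tp i k) := adj_tp_right hik
  have hLHS : ∑ p ∈ Nb (tp i k), u i j * u p l * u i j' = u i j * u k l * u i j' := by
    refine Finset.sum_eq_single_of_mem k (mem_Nb.mpr hkm.symm) ?_
    intro p hp hpk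
    have hmp : Adj (tp i k) p := mem_Nb.mp hp
    by_cases hpi : p = i
    · subst hpi
      rw [hu.row_orth p j l hjl.ne, zero_mul]
    · by_cases hadj : Adj i p
      · exact absurd (by rw [uniq him hadj.symm hmp.symm, tp_tp hik]) hpk
      · rw [kna u hu hadj (Ne.symm hpi) hjl, zero_mul]
  have hRHS : ∀ q ∈ Nb l, u i j * u (tp i k) q * u i j' = 0 := by
    intro q hq
    have hlq : Adj l q := mem_Nb.mp hq
    by_cases hqj : q = j
    · subst hqj
      rw [hu.col_orth q i (tp i k) him.ne, zero_mul]
    · by_cases haj : Adj j q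
      · have hqn : q = tp j l := uniq hjl haj.symm hlq.symm
        subst hqn
        by_cases hj'e : j' = tp j l
        · rw [mul_assoc, hj'e, hu.col_orth (tp j l) (tp i k) i (Ne.symm him.ne), mul_zero]
        · by_cases hj'n : Adj (tp j l) j'
          · have h5 : j' = tp (tp j l) l :=
              uniq (adj_tp_right hjl).symm hj'n.symm hj'l
            rw [tp_tp_right hjl] at h5
            exact absurd h5 hj'j
          · rw [mul_assoc, kan u hu him.symm hj'n (Ne.symm hj'e), mul_zero]
      · rw [kan u hu him haj (Ne.symm hqj), zero_mul]
  calc u i j * u k l * u i j'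
      = ∑ p ∈ Nb (tp i k), u i j * u p l * u i j' := hLHS.symm
    _ = (u i j * ∑ p ∈ Nb (tp i k), u p l) * u i j' := by
        rw [Finset.mul_sum, Finset.sum_mul]
    _ = (u i j * ∑ q ∈ Nb l, u (tp i k) q) * u i j' := by rw [Rlem u hu]
    _ = ∑ q ∈ Nb l, u i j * u (tp i k) q * u i j' := by
        rw [Finset.mul_sum, Finset.sum_mul]
    _ = 0 := Finset.sum_eq_zero hRHS

/-- adjacent rows: all entries commute -/
lemma com1 {i k : OVert2} (hik : Adj i k) (j l : OVert2) :
    u i j * u k l = u k l * u i j := by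
  by_cases hjl : Adj j l
  · have he : u i j * u k l = u i j * u k l * u i j := by
      conv_lhs => rw [← mul_one (u i j * u k l), ← hu.row_sum i, Finset.mul_sum]
      refine Finset.sum_eq_single_of_mem j (Finset.mem_univ j) ?_
      intro b _ hbj
      by_cases hbl : Adj l b
      · exact key1 u hu hik hjl hbl.symm hbj
      · by_cases hbeq : b = l
        · subst hbeq
          rw [mul_assoc, hu.col_orth b k i (Ne.symm hik.ne), mul_zero]
        · rw [mul_assoc, kan u hu hik.symm hbl (Ne.symm hbeq), mul_zero]
    have hsa : star (u i j * u k l) = u i j * u k l := by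
      conv_lhs => rw [he]
      rw [star_mul, star_mul, hu.star_self, hu.star_self, ← mul_assoc, ← he]
    calc u i j * u k l = star (u i j * u k l) := hsa.symm
      _ = star (u k l) * star (u i j) := star_mul _ _
      _ = u k l * u i j := by rw [hu.star_self, hu.star_self]
  · by_cases hjeq : j = l
    · subst hjeq
      rw [hu.col_orth j i k hik.ne, hu.col_orth j k i (Ne.symm hik.ne)]
    · rw [kan u hu hik hjl hjeq,
        kan u hu hik.symm (fun h => hjl h.symm) (Ne.symm hjeq)]

/-- the (A)-identity -/
lemma Aid {c m x y : OVert2} (hcm : Adj c m) (hxy : Adj x y) :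
    u c x * u (tp c m) y = u c x * u m (tp x y) := by
  have h1 : ∑ p ∈ Nb m, u c x * u p y = u c x * u (tp c m) y := by
    refine Finset.sum_eq_single_of_mem (tp c m) (mem_Nb.mpr (adj_tp_right hcm)) ?_
    intro p hp hne
    have hmp : Adj m p := mem_Nb.mp hp
    by_cases hpc : p = c
    · subst hpc
      exact hu.row_orth p x y hxy.ne
    · by_cases hadj : Adj c p
      · exact absurd (uniq hcm hadj.symm hmp.symm) hne
      · exact kna u hu hadj (Ne.symm hpc) hxy
  have h2 : ∑ q ∈ Nb y, u c x * u m q = u c x * u m (tp x y) := by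
    refine Finset.sum_eq_single_of_mem (tp x y) (mem_Nb.mpr (adj_tp_right hxy)) ?_
    intro q hq hne
    have hyq : Adj y q := mem_Nb.mp hq
    by_cases hqx : q = x
    · subst hqx
      exact hu.col_orth q c m hcm.ne
    · by_cases hadj : Adj x q
      · exact absurd (uniq hxy hadj.symm hyq.symm) hne
      · exact kan u hu hcm hadj (Ne.symm hqx)
  calc u c x * u (tp c m) y = ∑ p ∈ Nb m, u c x * u p y := h1.symm
    _ = u c x * ∑ p ∈ Nb m, u p y := by rw [Finset.mul_sum]
    _ = u c x * ∑ q ∈ Nb y, u m q := by rw [Rlem u hu]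
    _ = ∑ q ∈ Nb y, u c x * u m q := by rw [Finset.mul_sum]
    _ = u c x * u m (tp x y) := h2

/-- the triangle expansion (TRI) -/
lemma tri (m x y : OVert2) (hxy : Adj x y) :
    u m (tp x y) = ∑ c ∈ Nb m, u c x * u (tp c m) y := by
  have hone : ∑ z ∈ Nb x, u m z * u m (tp x y) = u m (tp x y) := by
    rw [Finset.sum_eq_single_of_mem (tp x y) (mem_Nb.mpr (adj_tp_left hxy))
      (fun z _ hne => hu.row_orth m z (tp x y) hne)]
    exact hu.idem m (tp x y)
  calc u m (tp x y)
      = ∑ z ∈ Nb x, u m z * u m (tp x y) := hone.symm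
    _ = (∑ z ∈ Nb x, u m z) * u m (tp x y) := by rw [Finset.sum_mul]
    _ = (∑ c ∈ Nb m, u c x) * u m (tp x y) := by rw [Rlem u hu]
    _ = ∑ c ∈ Nb m, u c x * u m (tp x y) := by rw [Finset.sum_mul]
    _ = ∑ c ∈ Nb m, u c x * u (tp c m) y :=
        Finset.sum_congr rfl (fun c hc => (Aid u hu (mem_Nb.mp hc).symm hxy).symm)

/-- the (E3) expansion over common neighbours -/
lemma E3 {i k j l q : OVert2} (hik : ¬Adj i k) (hikne : i ≠ k)
    (hqj : Adj q j) (hql : Adj q l) :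
    u i j * u k l = ∑ c ∈ Nb i ∩ Nb k,
      (u c q * u (tp c i) (tp q j)) * (u c q * u (tp c k) (tp q l)) := by
  have hj : u i j = ∑ c ∈ Nb i, u c q * u (tp c i) (tp q j) := by
    have h := tri u hu i q (tp q j) (adj_tp_left hqj)
    rwa [tp_tp hqj] at h
  have hl : u k l = ∑ e ∈ Nb k, u e q * u (tp e k) (tp q l) := by
    have h := tri u hu k q (tp q l) (adj_tp_left hql)
    rwa [tp_tp hql] at h
  have hinner : ∀ c ∈ Nb i,
      ∑ e ∈ Nb k, (u c q * u (tp c i) (tp q j)) * (u e q * u (tp e k) (tp q l))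
      = if c ∈ Nb k then (u c q * u (tp c i) (tp q j)) * (u c q * u (tp c k) (tp q l))
        else 0 := by
    intro c _
    have hadjn : Adj (tp q j) q := (adj_tp_left hqj).symm
    have hzero : ∀ e ∈ Nb k, e ≠ c →
        (u c q * u (tp c i) (tp q j)) * (u e q * u (tp e k) (tp q l)) = 0 := by
      intro e _ hec
      by_cases hetp : e = tp c i
      · rw [hetp]
        calc (u c q * u (tp c i) (tp q j)) * (u (tp c i) q * u (tp (tp c i) k) (tp q l))
            = u c q * (u (tp c i) (tp q j) * u (tp c i) q) * u (tp (tp c i) k) (tp q l) := by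
              rw [mul_assoc (u c q) _ _, ← mul_assoc _ (u (tp c i) q) _,
                ← mul_assoc (u c q) _ _]
          _ = 0 := by
              rw [hu.row_orth (tp c i) (tp q j) q (Ne.symm (adj_tp_left hqj).ne),
                mul_zero, zero_mul]
      · by_cases hadj : Adj (tp c i) e
        · calc (u c q * u (tp c i) (tp q j)) * (u e q * u (tp e k) (tp q l))
              = u c q * (u (tp c i) (tp q j) * u e q) * u (tp e k) (tp q l) := by
                rw [mul_assoc (u c q) _ _, ← mul_assoc _ (u e q) _, ← mul_assoc (u c q) _ _]
            _ = u c q * (u e q * u (tp c i) (tp q j)) * u (tp e k) (tp q l) := by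
                rw [com1 u hu hadj]
            _ = ((u c q * u e q) * u (tp c i) (tp q j)) * u (tp e k) (tp q l) := by
                rw [← mul_assoc (u c q) _ _]
            _ = 0 := by
                rw [hu.col_orth q c e (Ne.symm hec), zero_mul, zero_mul]
        · calc (u c q * u (tp c i) (tp q j)) * (u e q * u (tp e k) (tp q l))
              = u c q * (u (tp c i) (tp q j) * u e q) * u (tp e k) (tp q l) := by
                rw [mul_assoc (u c q) _ _, ← mul_assoc _ (u e q) _, ← mul_assoc (u c q) _ _]
          _ = 0 := by
              rw [kna u hu hadj (fun h => hetp h.symm) hadjn, mul_zero, zero_mul]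
    by_cases hck : c ∈ Nb k
    · rw [if_pos hck]
      exact Finset.sum_eq_single_of_mem c hck hzero
    · rw [if_neg hck]
      exact Finset.sum_eq_zero (fun e he => hzero e he (fun h => hck (h ▸ he)))
  calc u i j * u k l
      = ∑ c ∈ Nb i, ∑ e ∈ Nb k,
          (u c q * u (tp c i) (tp q j)) * (u e q * u (tp e k) (tp q l)) := by
        rw [hj, hl, Finset.sum_mul_sum]
    _ = ∑ c ∈ Nb i, if c ∈ Nb k then
          (u c q * u (tp c i) (tp q j)) * (u c q * u (tp c k) (tp q l)) else 0 :=
        Finset.sum_congr rfl hinner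
    _ = ∑ c ∈ Nb i ∩ Nb k,
          (u c q * u (tp c i) (tp q j)) * (u c q * u (tp c k) (tp q l)) :=
        Finset.sum_ite_mem _ _ _

/-- key lemma for non-adjacent rows -/
lemma key2 {i k j l j' : OVert2} (hik : ¬Adj i k) (hikne : i ≠ k) (hjl : ¬Adj j l)
    (hjlne : j ≠ l) (hj'l : ¬Adj j' l) (hj'lne : j' ≠ l) (hj'j : j' ≠ j) :
    u i j * u k l * u i j' = 0 := by
  obtain ⟨q, hqj, hql, hcase⟩ := exists_q hjl hj'l hjlne hj'lne hj'j
  rw [E3 u hu hik hikne hqj hql, Finset.sum_mul]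
  refine Finset.sum_eq_zero ?_
  intro c hc
  rw [Finset.mem_inter, mem_Nb, mem_Nb] at hc
  obtain ⟨hic, hkc⟩ := hc
  have hck : Adj c k := hkc.symm
  have hrow_ne : tp c k ≠ i := by
    intro he
    have h := adj_tp_right hck
    rw [he] at h
    exact hik h.symm
  have hrow_na : ¬Adj (tp c k) i := by
    intro ha
    have h2 : i = tp c (tp c k) := uniq (adj_tp_left hck) hic ha.symm
    rw [tp_tp hck] at h2
    exact hikne h2
  have hz : u (tp c k) (tp q l) * u i j' = 0 := by
    rcases hcase with h | h
    · rw [h]; exact hu.col_orth (tp q l) (tp c k) i hrow_ne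
    · exact kna u hu hrow_na hrow_ne h.symm
  rw [mul_assoc (u c q * u (tp c i) (tp q j)) (u c q * u (tp c k) (tp q l)) (u i j'),
    mul_assoc (u c q) (u (tp c k) (tp q l)) (u i j'), hz, mul_zero, mul_zero]

/-- non-adjacent distinct rows: all entries commute -/
lemma com2 {i k : OVert2} (hik : ¬Adj i k) (hikne : i ≠ k) (j l : OVert2) :
    u i j * u k l = u k l * u i j := by
  by_cases hjeq : j = l
  · subst hjeq
    rw [hu.col_orth j i k hikne, hu.col_orth j k i (Ne.symm hikne)]
  · by_cases hjl : Adj j l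
    · rw [kna u hu hik hikne hjl, kna u hu (fun h => hik h.symm) (Ne.symm hikne) hjl.symm]
    · have he : u i j * u k l = u i j * u k l * u i j := by
        conv_lhs => rw [← mul_one (u i j * u k l), ← hu.row_sum i, Finset.mul_sum]
        refine Finset.sum_eq_single_of_mem j (Finset.mem_univ j) ?_
        intro b _ hbj
        by_cases hbeq : b = l
        · subst hbeq
          rw [mul_assoc, hu.col_orth b k i (Ne.symm hikne), mul_zero]
        · by_cases hbl : Adj l b
          · rw [mul_assoc, kna u hu (fun h => hik h.symm) (Ne.symm hikne) hbl, mul_zero]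
          · exact key2 u hu hik hikne hjl hjeq (fun h => hbl h.symm) hbeq hbj
      have hsa : star (u i j * u k l) = u i j * u k l := by
        conv_lhs => rw [he]
        rw [star_mul, star_mul, hu.star_self, hu.star_self, ← mul_assoc, ← he]
      calc u i j * u k l = star (u i j * u k l) := hsa.symm
        _ = star (u k l) * star (u i j) := star_mul _ _
        _ = u k l * u i j := by rw [hu.star_self, hu.star_self]

end
end SchlafliAux

/-- All entries of a magic unitary of the complement of `O⁻(6,2)` (the Schläfli graph)
pairwise commute: the Schläfli graph has no quantum symmetry. -/
theorem schlafli_no_quantum_symmetry {A : Type*} [Ring A] [StarRing A] [Algebra ℂ A]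
    (u : OVert2 → OVert2 → A) (hu : IsMagicUnitary OMinus62ᶜ A u)
    (i j k l : OVert2) :
    u i j * u k l = u k l * u i j := by
  by_cases hik : i = k
  · subst hik
    by_cases hjl : j = l
    · subst hjl; rfl
    · rw [hu.row_orth i j l hjl, hu.row_orth i l j (Ne.symm hjl)]
  · by_cases hadj : OMinus62.Adj i k
    · exact SchlafliAux.com1 u hu hadj j l
    · exact SchlafliAux.com2 u hu hadj hik j l
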